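/- arXiv:2205.06418 — 6 statements merged into one kernel-verified Lean document; each statement's English description precedes it below -/
import Mathlib

section
/- Let R be an associative algebra over a field F and let q be an element of F* that is not a root of unity. Suppose a, b are elements of R such that b can be written as a finite sum b = sum over i of b_i with a*b_i = q^i * b_i * a for each i. Then there exists N in the natural numbers and elements b', b'' in the subalgebra generated by a and b such that a^(N+1) * b = b' * a and b * a^(N+1) = a * b''; in particular a is a (left and right) Ore element of the subalgebra F<a,b>. -/
/-- Lemma (Ore condition): if `b = ∑ bᵢ` with `a * bᵢ = qⁱ • (bᵢ * a)` and `q` is not a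
root of unity, then there exist `N` and `b', b''` in the (non-unital) subalgebra generated
by `a` and `b` with `a^(N+1) * b = b' * a` and `b * a^(N+1) = a * b''`; in particular `a`
is a left and right Ore element of `F⟨a,b⟩`. -/
theorem stmt0 {F : Type*} [Field F] {R : Type*} [Ring R] [Algebra F R]
    (q : F) (hq0 : q ≠ 0) (hq : ∀ k : ℕ, 0 < k → q ^ k ≠ 1)
    (a b : R) (s : Finset ℤ) (c : ℤ → R)
    (hb : b = ∑ i ∈ s, c i)
    (hrel : ∀ i ∈ s, a * c i = q ^ i • (c i * a)) :
    ∃ N : ℕ, ∃ b' ∈ NonUnitalAlgebra.adjoin F ({a, b} : Set R),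
      ∃ b'' ∈ NonUnitalAlgebra.adjoin F ({a, b} : Set R),
        a ^ (N + 1) * b = b' * a ∧ b * a ^ (N + 1) = a * b'' := by
  classical
  rcases s.eq_empty_or_nonempty with rfl | hs
  · exact ⟨0, 0, zero_mem _, 0, zero_mem _, by simp [hb], by simp [hb]⟩
  set S := NonUnitalAlgebra.adjoin F ({a, b} : Set R) with hS
  have ha : a ∈ S := NonUnitalAlgebra.subset_adjoin F (by simp)
  have hbS : b ∈ S := NonUnitalAlgebra.subset_adjoin F (by simp)
  have hpowL : ∀ (k : ℕ) (x : R), x ∈ S → a ^ k * x ∈ S := by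
    intro k
    induction k with
    | zero => intro x hx; simpa using hx
    | succ n ih =>
      intro x hx
      rw [pow_succ, mul_assoc]
      exact ih _ (mul_mem ha hx)
  have hpowR : ∀ (m : ℕ) (x : R), x ∈ S → x * a ^ m ∈ S := by
    intro m
    induction m with
    | zero => intro x hx; simpa using hx
    | succ n ih =>
      intro x hx
      rw [pow_succ', ← mul_assoc]
      exact ih _ (mul_mem hx ha)
  -- key lemma
  have keyA : ∀ m : ℕ, a ^ m * b = ∑ i ∈ s, ((q ^ i) ^ m) • (c i * a ^ m) := by
    intro m
    induction m with
    | zero => simp [hb]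
    | succ n ih =>
      rw [pow_succ', mul_assoc, ih, Finset.mul_sum]
      refine Finset.sum_congr rfl fun i hi => ?_
      rw [mul_smul_comm, ← mul_assoc, hrel i hi, smul_mul_assoc, smul_smul,
        mul_assoc, ← pow_succ', ← pow_succ]
  set N : ℕ := s.card - 1 with hNdef
  have hN : N + 1 = s.card := Nat.succ_pred_eq_of_pos hs.card_pos
  set P : Polynomial F := ∏ j ∈ s, (Polynomial.X - Polynomial.C (q ^ j)) with hP
  have hmonic : P.Monic := Polynomial.monic_prod_of_monic _ _
    fun j _ => Polynomial.monic_X_sub_C _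
  have hdeg : P.natDegree = N + 1 := by
    rw [hP, Polynomial.natDegree_prod _ _ fun j _ => Polynomial.X_sub_C_ne_zero _]
    simp [hN]
  have hroot : ∀ i ∈ s, P.eval (q ^ i) = 0 := by
    intro i hi
    rw [hP, Polynomial.eval_prod]
    exact Finset.prod_eq_zero hi (by simp)
  have heval : ∀ x : F, P.eval x = ∑ k ∈ Finset.range (N + 2), P.coeff k * x ^ k := by
    intro x
    rw [Polynomial.eval_eq_sum_range, hdeg]
  have htop : P.coeff (N + 1) = 1 := by
    have := hmonic.coeff_natDegree
    rwa [hdeg] at this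
  -- scalar identity 1
  have hscal1 : ∀ i ∈ s,
      (q ^ i) ^ (N + 1) = ∑ k ∈ Finset.range (N + 1), (-(P.coeff k)) * (q ^ i) ^ k := by
    intro i hi
    have h0 := hroot i hi
    rw [heval, Finset.sum_range_succ, htop, one_mul] at h0
    have : ∑ k ∈ Finset.range (N + 1), (-(P.coeff k)) * (q ^ i) ^ k
        = -∑ k ∈ Finset.range (N + 1), P.coeff k * (q ^ i) ^ k := by
      simp [neg_mul]
    rw [this]
    linear_combination h0
  -- d ≠ 0
  have hd : P.coeff 0 ≠ 0 := by
    rw [Polynomial.coeff_zero_eq_eval_zero, hP, Polynomial.eval_prod]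
    refine Finset.prod_ne_zero_iff.mpr fun j hj => ?_
    simp only [Polynomial.eval_sub, Polynomial.eval_X, Polynomial.eval_C, zero_sub]
    exact neg_ne_zero.mpr (zpow_ne_zero _ hq0)
  -- scalar identity 2
  have hscal2 : ∀ i ∈ s,
      (1 : F) = ∑ k ∈ Finset.range (N + 1),
        (-(P.coeff 0)⁻¹ * P.coeff (k + 1)) * (q ^ i) ^ (k + 1) := by
    intro i hi
    have h0 := hroot i hi
    rw [heval, Finset.sum_range_succ'] at h0
    simp only [pow_zero, mul_one] at h0
    have hsum : ∑ k ∈ Finset.range (N + 1), P.coeff (k + 1) * (q ^ i) ^ (k + 1)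
        = -(P.coeff 0) := by linear_combination h0
    calc (1 : F) = -(P.coeff 0)⁻¹ * (-(P.coeff 0)) := by
          field_simp
      _ = -(P.coeff 0)⁻¹ * ∑ k ∈ Finset.range (N + 1),
            P.coeff (k + 1) * (q ^ i) ^ (k + 1) := by rw [hsum]
      _ = _ := by rw [Finset.mul_sum]; exact Finset.sum_congr rfl fun k _ => by ring
  -- the elements
  set b' : R := ∑ k ∈ Finset.range (N + 1), (-(P.coeff k)) • (a ^ k * b * a ^ (N - k))
    with hb'
  set b'' : R := ∑ k ∈ Finset.range (N + 1),
    (-(P.coeff 0)⁻¹ * P.coeff (k + 1)) • (a ^ k * b * a ^ (N - k)) with hb''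
  have hterm : ∀ k : ℕ, a ^ k * b * a ^ (N - k) ∈ S :=
    fun k => hpowR _ _ (hpowL _ _ hbS)
  have hb'S : b' ∈ S := sum_mem fun k _ => SMulMemClass.smul_mem _ (hterm k)
  have hb''S : b'' ∈ S := sum_mem fun k _ => SMulMemClass.smul_mem _ (hterm k)
  refine ⟨N, b', hb'S, b'', hb''S, ?_, ?_⟩
  · -- a ^ (N+1) * b = b' * a
    rw [keyA, hb', Finset.sum_mul]
    have step : ∀ k ∈ Finset.range (N + 1),
        ((-(P.coeff k)) • (a ^ k * b * a ^ (N - k))) * a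
          = ∑ i ∈ s, ((-(P.coeff k)) * (q ^ i) ^ k) • (c i * a ^ (N + 1)) := by
      intro k hk
      have hk' : k ≤ N := Nat.lt_succ_iff.mp (Finset.mem_range.mp hk)
      rw [smul_mul_assoc, keyA k, Finset.sum_mul, Finset.sum_mul, Finset.smul_sum]
      refine Finset.sum_congr rfl fun i hi => ?_
      have h2 : a ^ k * (a ^ (N - k) * a) = a ^ (N + 1) := by
        rw [← pow_succ, ← pow_add]
        congr 1
        omega
      rw [smul_mul_assoc, smul_mul_assoc, smul_smul, mul_assoc (c i * a ^ k),
        mul_assoc (c i), h2]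
    rw [Finset.sum_congr rfl step, Finset.sum_comm]
    refine Finset.sum_congr rfl fun i hi => ?_
    rw [← Finset.sum_smul, ← hscal1 i hi]
  · -- b * a^(N+1) = a * b''
    have lhs : b * a ^ (N + 1) = ∑ i ∈ s, (1 : F) • (c i * a ^ (N + 1)) := by
      rw [hb, Finset.sum_mul]
      simp
    rw [lhs, hb'', Finset.mul_sum]
    have step : ∀ k ∈ Finset.range (N + 1),
        a * ((-(P.coeff 0)⁻¹ * P.coeff (k + 1)) • (a ^ k * b * a ^ (N - k)))
          = ∑ i ∈ s, ((-(P.coeff 0)⁻¹ * P.coeff (k + 1)) * (q ^ i) ^ (k + 1)) •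
              (c i * a ^ (N + 1)) := by
      intro k hk
      have hk' : k ≤ N := Nat.lt_succ_iff.mp (Finset.mem_range.mp hk)
      rw [mul_smul_comm, ← mul_assoc, ← mul_assoc, ← pow_succ', keyA (k + 1),
        Finset.sum_mul, Finset.smul_sum]
      refine Finset.sum_congr rfl fun i hi => ?_
      have h2 : a ^ (k + 1) * a ^ (N - k) = a ^ (N + 1) := by
        rw [← pow_add]
        congr 1
        omega
      rw [smul_mul_assoc, smul_smul, mul_assoc (c i), h2]
    rw [Finset.sum_congr rfl step, Finset.sum_comm]
    refine Finset.sum_congr rfl fun i hi => ?_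
    rw [← Finset.sum_smul, ← hscal2 i hi]
end

section
/- In the quantum torus L_q[H] of dimension k (generated by invertible elements x_1,...,x_k with x_i x_j = q^{h_{ij}} x_j x_i, for q not a root of unity), every unit (invertible element) is a nonzero scalar multiple of a monomial x^a = x_1^{a_1} ... x_k^{a_k} for some a in Z^k. -/
/-!
`ℤ^k` has two unique sums (it is torsion-free, even totally ordered), and monomials multiply up
to nonzero scalars: `x^a x^b = c x^(a+b)`, because the generators commute modulo scalars. If a
unit `u` had two or more monomials in its expansion, then among the pairs of exponents of `u`
and `u⁻¹` there would be two with unique sums; these sums are distinct and both occur with a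
nonzero coefficient in `u u⁻¹ = x^0`, which has a single monomial.
-/

open scoped Matrix

/-- The ordered monomial `x^a = x₁^{a₁} ⋯ x_k^{a_k}` in a quantum torus. -/
noncomputable def qtMonomial {A : Type*} [Ring A] {k : ℕ} (x : Fin k → Aˣ)
    (a : Fin k → ℤ) : Aˣ :=
  ((List.finRange k).map fun i => x i ^ a i).prod

open Finset

section TwistedBasis

variable {K A G : Type*} [CommSemiring K] [Semiring A] [Algebra K A]

theorem Module.Basis.repr_mul_apply_of_mul_eq_smul [Add G] [DecidableEq G]
    (b : Module.Basis G K A) (c : G → G → K) (hc : ∀ g h, b g * b h = c g h • b (g + h))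
    (w w' : A) (s : G) :
    b.repr (w * w') s = ∑ p ∈ (b.repr w).support, ∑ p' ∈ (b.repr w').support,
      if p + p' = s then b.repr w p * b.repr w' p' * c p p' else 0 := by
  have hsum : ∀ v : A, v = ∑ p ∈ (b.repr v).support, b.repr v p • b p := fun v => by
    conv_lhs => rw [← b.linearCombination_repr v]
    rfl
  conv_lhs => rw [hsum w, hsum w', sum_mul_sum]
  simp only [smul_mul_smul_comm, hc, smul_smul, map_sum, map_smul, b.repr_self,
    Finsupp.finsetSum_apply, Finsupp.smul_apply, Finsupp.single_apply, smul_eq_mul,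
    mul_ite, mul_one, mul_zero]

theorem Module.Basis.repr_mul_apply_of_uniqueAdd [Add G] (b : Module.Basis G K A)
    (c : G → G → K) (hc : ∀ g h, b g * b h = c g h • b (g + h)) {w w' : A} {p p' : G}
    (hp : p ∈ (b.repr w).support) (hp' : p' ∈ (b.repr w').support)
    (huniq : UniqueAdd (b.repr w).support (b.repr w').support p p') :
    b.repr (w * w') (p + p') = b.repr w p * b.repr w' p' * c p p' := by
  classical
  rw [b.repr_mul_apply_of_mul_eq_smul c hc, ← sum_product', sum_eq_single_of_mem (p, p')
    (mem_product.2 ⟨hp, hp'⟩), if_pos rfl]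
  rintro ⟨a, a'⟩ ha hne
  refine if_neg fun hsum => hne ?_
  obtain ⟨rfl, rfl⟩ := huniq (mem_product.1 ha).1 (mem_product.1 ha).2 hsum
  rfl

theorem Module.Basis.exists_eq_smul_of_isUnit [NoZeroDivisors K] [Nontrivial K] [AddZeroClass G]
    [TwoUniqueSums G] (b : Module.Basis G K A) (c : G → G → K)
    (hc : ∀ g h, b g * b h = c g h • b (g + h)) (hc0 : ∀ g h, c g h ≠ 0) (hb0 : b 0 = 1)
    (u : Aˣ) : ∃ (a : K) (g : G), a ≠ 0 ∧ (u : A) = a • b g := by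
  have : Nontrivial A := nontrivial_of_ne (b 0) 0 (b.ne_zero 0)
  set S := (b.repr u).support
  set T := (b.repr ↑u⁻¹).support
  have hS : S.Nonempty := by
    simp [S, Finsupp.support_nonempty_iff, u.ne_zero]
  have hT : T.Nonempty := by
    simp [T, Finsupp.support_nonempty_iff, u⁻¹.ne_zero]
  have hsum_zero : ∀ p ∈ S, ∀ p' ∈ T, UniqueAdd S T p p' → p + p' = 0 := by
    intro p hp p' hp' huniq
    have hne := b.repr_mul_apply_of_uniqueAdd c hc hp hp' huniq
    rw [Units.mul_inv, ← hb0, b.repr_self] at hne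
    by_contra h
    rw [Finsupp.single_eq_of_ne h] at hne
    exact mul_ne_zero (mul_ne_zero (Finsupp.mem_support_iff.1 hp)
      (Finsupp.mem_support_iff.1 hp')) (hc0 p p') hne.symm
  have hcard : #S * #T ≤ 1 := by
    by_contra! h
    obtain ⟨⟨p, p'⟩, hpp, ⟨r, r'⟩, hrr, hne, hu, hu'⟩ := TwoUniqueSums.uniqueAdd_of_one_lt_card h
    rw [mem_product] at hpp hrr
    have := hu hrr.1 hrr.2 ((hsum_zero r hrr.1 r' hrr.2 hu').trans
      (hsum_zero p hpp.1 p' hpp.2 hu).symm)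
    exact hne (Prod.ext this.1 this.2).symm
  obtain ⟨g, hg⟩ := card_eq_one.1 (le_antisymm
    ((Nat.le_mul_of_pos_right _ hT.card_pos).trans hcard) hS.card_pos)
  have hg' : (b.repr u).support = {g} := hg
  refine ⟨b.repr u g, g, Finsupp.mem_support_iff.1 (hg' ▸ mem_singleton_self g), ?_⟩
  conv_lhs => rw [← b.linearCombination_repr u]
  rw [Finsupp.linearCombination_apply, Finsupp.sum, hg', sum_singleton]

end TwistedBasis

theorem List.prod_map_zpow_mul_prod_map_zpow {ι G : Type*} [Group G] {y : ι → G}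
    (hy : ∀ i j, Commute (y i) (y j)) (L : List ι) (a a' : ι → ℤ) :
    (L.map fun i => y i ^ a i).prod * (L.map fun i => y i ^ a' i).prod =
      (L.map fun i => y i ^ (a i + a' i)).prod := by
  induction L with
  | nil => simp
  | cons i L ih =>
    have hcomm : Commute (L.map fun j => y j ^ a j).prod (y i ^ a' i) :=
      Commute.list_prod_left _ _ fun _ hz => by
        obtain ⟨j, -, rfl⟩ := List.mem_map.1 hz
        exact (hy j i).zpow_zpow _ _
    rw [List.map_cons, List.map_cons, List.map_cons, List.prod_cons, List.prod_cons,
      List.prod_cons, ← ih, zpow_add, mul_assoc, hcomm.left_comm, mul_assoc]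

section ScalarUnits

variable (K A : Type*) [CommSemiring K] [Semiring A] [Algebra K A]

def scalarUnits : Subgroup Aˣ := (Units.map (algebraMap K A : K →* A)).range

instance scalarUnits.instNormal : (scalarUnits K A).Normal :=
  ⟨fun _ ⟨c, hc⟩ g => ⟨c, by
    rw [hc, eq_mul_inv_iff_mul_eq, ← hc]
    exact Units.ext (Algebra.commutes (c : K) (g : A))⟩⟩

variable {K A}

theorem scalarUnits.mk_eq_mk_iff {u v : Aˣ} :
    (u : Aˣ ⧸ scalarUnits K A) = v ↔ ∃ c : Kˣ, (v : A) = (c : K) • (u : A) := by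
  rw [QuotientGroup.eq]
  refine exists_congr fun c => ?_
  rw [eq_inv_mul_iff_mul_eq, Units.ext_iff, Algebra.smul_def, Units.val_mul, Units.coe_map,
    MonoidHom.coe_coe, ← Algebra.commutes, eq_comm]

end ScalarUnits

theorem qtMonomial_mul_qtMonomial {K A : Type*} [CommSemiring K] [Ring A] [Algebra K A] {k : ℕ}
    {x : Fin k → Aˣ} (hx : ∀ i j, ∃ c : Kˣ, (x i : A) * x j = (c : K) • ((x j : A) * x i))
    (a a' : Fin k → ℤ) :
    ∃ c : Kˣ, (qtMonomial x a : A) * qtMonomial x a' = (c : K) • (qtMonomial x (a + a') : A) := by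
  let π := QuotientGroup.mk' (scalarUnits K A)
  have hcomm : ∀ i j, Commute (π (x i)) (π (x j)) := fun i j =>
    (scalarUnits.mk_eq_mk_iff.2 (hx i j)).symm
  refine scalarUnits.mk_eq_mk_iff.1
    (?_ : π (qtMonomial x (a + a')) = π (qtMonomial x a * qtMonomial x a'))
  simp only [qtMonomial, map_mul, map_list_prod, List.map_map, Function.comp_def, map_zpow,
    Pi.add_apply]
  exact (List.prod_map_zpow_mul_prod_map_zpow hcomm _ a a').symm

theorem qtMonomial_zero {A : Type*} [Ring A] {k : ℕ} (x : Fin k → Aˣ) : qtMonomial x 0 = 1 := by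
  simp [qtMonomial]

theorem stmt1_general {k : ℕ} (q : ℂ) (hq0 : q ≠ 0)
    (H : Matrix (Fin k) (Fin k) ℤ)
    {A : Type*} [Ring A] [Algebra ℂ A]
    (x : Fin k → Aˣ)
    (hrel : ∀ i j, (x i : A) * (x j : A) = q ^ (H i j) • ((x j : A) * (x i : A)))
    (b : Module.Basis (Fin k → ℤ) ℂ A)
    (hb : ∀ a : Fin k → ℤ, b a = (qtMonomial x a : A)) :
    ∀ u : Aˣ, ∃ (c : ℂ) (a : Fin k → ℤ), c ≠ 0 ∧ (u : A) = c • (qtMonomial x a : A) := by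
  have hx : ∀ i j, ∃ c : ℂˣ, (x i : A) * x j = (c : ℂ) • ((x j : A) * x i) :=
    fun i j => ⟨Units.mk0 q hq0 ^ H i j, by simpa using hrel i j⟩
  choose c hc using qtMonomial_mul_qtMonomial hx
  intro u
  obtain ⟨a, g, ha, hu⟩ := b.exists_eq_smul_of_isUnit (fun g h => (c g h : ℂ))
    (fun g h => by simpa only [hb] using hc g h) (fun g h => (c g h).ne_zero)
    (by rw [hb, qtMonomial_zero, Units.val_one]) u
  exact ⟨a, g, ha, hb g ▸ hu⟩

/-- In the quantum torus `L_q[H]` (with `q` not a root of unity), every unit is a nonzero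
scalar multiple of a monomial `x^a` for some `a ∈ ℤ^k`.  The quantum torus is axiomatized
as an algebra `A` with invertible generators `x i` satisfying `xᵢxⱼ = q^{hᵢⱼ} xⱼxᵢ` whose
ordered monomials form a `ℂ`-basis. -/
theorem stmt1 {k : ℕ} (q : ℂ) (hq0 : q ≠ 0) (hq : ∀ r : ℕ, 0 < r → q ^ r ≠ 1)
    (H : Matrix (Fin k) (Fin k) ℤ) (hH : Hᵀ = -H)
    {A : Type*} [Ring A] [Algebra ℂ A]
    (x : Fin k → Aˣ)
    (hrel : ∀ i j, (x i : A) * (x j : A) = q ^ (H i j) • ((x j : A) * (x i : A)))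
    (b : Module.Basis (Fin k → ℤ) ℂ A)
    (hb : ∀ a : Fin k → ℤ, b a = (qtMonomial x a : A)) :
    ∀ u : Aˣ, ∃ (c : ℂ) (a : Fin k → ℤ), c ≠ 0 ∧ (u : A) = c • (qtMonomial x a : A) :=
  stmt1_general q hq0 H x hrel b hb
end

section
/- Let C_q[SL_2] be the algebra with generators x_{11},x_{12},x_{21},x_{22} and relations x_{11}x_{12}=q x_{12}x_{11}, x_{11}x_{21}=q x_{21}x_{11}, x_{12}x_{22}=q x_{22}x_{12}, x_{21}x_{22}=q x_{22}x_{21}, x_{12}x_{21}=x_{21}x_{12}, x_{11}x_{22}−x_{22}x_{11}=(q−q^{-1})x_{12}x_{21}, x_{11}x_{22}−q x_{12}x_{21}=1. Then for parameters γ,η in C* with γη ≠ −q^{2k+1} for all integers k, the assignments x_{11} e_i = (1+γη q^{2i−1}) e_{i−1}, x_{22} e_i = e_{i+1}, x_{12} e_i = η q^i e_i, x_{21} e_i = γ q^i e_i on the vector space with basis {e_i : i in Z} define a C_q[SL_2]-module structure. -/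
/-!
All four operators are weighted shifts `eᵢ ↦ w(i) e_{i+d}`. Weighted shifts compose by
`(w, d) ∘ (v, c) = (w(· + c) v, c + d)` and are closed under scalars and differences, so each
relation reduces to an identity between weight functions, which is an identity of Laurent
monomials in `q` once `q ≠ 0`.
-/

/-- `x₁₁ eᵢ = (1 + γη q^{2i−1}) e_{i−1}` on the space with basis `{eᵢ : i ∈ ℤ}`. -/
noncomputable def X11 (q γ η : ℂ) : Module.End ℂ (ℤ →₀ ℂ) :=
  Finsupp.lsum ℂ fun i : ℤ => (1 + γ * η * q ^ (2 * i - 1)) • Finsupp.lsingle (i - 1)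

/-- `x₂₂ eᵢ = e_{i+1}`. -/
noncomputable def X22 : Module.End ℂ (ℤ →₀ ℂ) :=
  Finsupp.lsum ℂ fun i : ℤ => Finsupp.lsingle (i + 1)

/-- `x₁₂ eᵢ = η qⁱ eᵢ`. -/
noncomputable def X12 (q η : ℂ) : Module.End ℂ (ℤ →₀ ℂ) :=
  Finsupp.lsum ℂ fun i : ℤ => (η * q ^ i) • Finsupp.lsingle i

/-- `x₂₁ eᵢ = γ qⁱ eᵢ`. -/
noncomputable def X21 (q γ : ℂ) : Module.End ℂ (ℤ →₀ ℂ) :=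
  Finsupp.lsum ℂ fun i : ℤ => (γ * q ^ i) • Finsupp.lsingle i

namespace Finsupp

section CommSemiring

variable {R G : Type*} [CommSemiring R]

noncomputable def weightedShift [Add G] (d : G) (w : G → R) : Module.End R (G →₀ R) :=
  lsum R fun i => w i • lsingle (i + d)

theorem weightedShift_single [Add G] (d : G) (w : G → R) (i : G) (b : R) :
    weightedShift d w (single i b) = single (i + d) (w i * b) := by
  simp [weightedShift, smul_single]

theorem weightedShift_mul [AddSemigroup G] (c d : G) (v w : G → R) :
    weightedShift d w * weightedShift c v = weightedShift (c + d) fun i => w (i + c) * v i := by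
  refine lhom_ext fun i b => ?_
  rw [Module.End.mul_apply, weightedShift_single, weightedShift_single, weightedShift_single,
    add_assoc, mul_assoc]

theorem smul_weightedShift [Add G] (a : R) (d : G) (w : G → R) :
    a • weightedShift d w = weightedShift d (a • w) := by
  refine lhom_ext fun i b => ?_
  rw [LinearMap.smul_apply, weightedShift_single, weightedShift_single, smul_single,
    Pi.smul_apply, smul_eq_mul, smul_eq_mul, mul_assoc]

theorem weightedShift_zero_one [AddZeroClass G] : weightedShift (0 : G) (1 : G → R) = 1 := by
  refine lhom_ext fun i b => ?_
  rw [weightedShift_single, add_zero, Pi.one_apply, one_mul, Module.End.one_apply]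

end CommSemiring

theorem weightedShift_sub {R G : Type*} [CommRing R] [Add G] (d : G) (v w : G → R) :
    weightedShift d v - weightedShift d w = weightedShift d (v - w) := by
  refine lhom_ext fun i b => ?_
  rw [LinearMap.sub_apply, weightedShift_single, weightedShift_single, weightedShift_single,
    Pi.sub_apply, sub_mul, single_sub]

end Finsupp

open Finsupp

theorem X11_eq_weightedShift (q γ η : ℂ) :
    X11 q γ η = weightedShift (-1) fun i => 1 + γ * η * q ^ (2 * i - 1) := by
  simp only [X11, weightedShift, sub_eq_add_neg]

theorem X22_eq_weightedShift : X22 = weightedShift 1 (1 : ℤ → ℂ) := by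
  simp only [X22, weightedShift, Pi.one_apply, one_smul]

theorem X12_eq_weightedShift (q η : ℂ) : X12 q η = weightedShift 0 fun i => η * q ^ i := by
  simp only [X12, weightedShift, add_zero]

theorem X21_eq_weightedShift (q γ : ℂ) : X21 q γ = weightedShift 0 fun i => γ * q ^ i := by
  simp only [X21, weightedShift, add_zero]

theorem stmt6_general (q γ η : ℂ) (hq0 : q ≠ 0) :
    X11 q γ η * X12 q η = q • (X12 q η * X11 q γ η) ∧
    X11 q γ η * X21 q γ = q • (X21 q γ * X11 q γ η) ∧
    X12 q η * X22 = q • (X22 * X12 q η) ∧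
    X21 q γ * X22 = q • (X22 * X21 q γ) ∧
    X12 q η * X21 q γ = X21 q γ * X12 q η ∧
    X11 q γ η * X22 - X22 * X11 q γ η = (q - q⁻¹) • (X12 q η * X21 q γ) ∧
    X11 q γ η * X22 - q • (X12 q η * X21 q γ) = 1 := by
  simp only [X11_eq_weightedShift, X22_eq_weightedShift, X12_eq_weightedShift,
    X21_eq_weightedShift, weightedShift_mul, smul_weightedShift, add_zero, zero_add,
    neg_add_cancel, add_neg_cancel, weightedShift_sub]
  rw [← weightedShift_zero_one]
  refine ⟨?_, ?_, ?_, ?_, congrArg (weightedShift 0) (funext fun i => mul_comm _ _), ?_, ?_⟩ <;>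
    refine congrArg (weightedShift _) (funext fun i => ?_) <;>
    simp only [Pi.smul_apply, Pi.sub_apply, Pi.one_apply, smul_eq_mul, zpow_add₀ hq0,
      zpow_sub₀ hq0, zpow_mul', zpow_ofNat] <;>
    field_simp <;>
    ring

/-- For `γ, η ∈ ℂ*` with `γη ≠ −q^{2k+1}` for all integers `k`, the Laurent-type
assignments define a `ℂ_q[SL₂]`-module structure on `⊕_{i∈ℤ} ℂ eᵢ`: the four operators
satisfy all seven defining relations of `ℂ_q[SL₂]`. -/
theorem stmt6 (q γ η : ℂ) (hq0 : q ≠ 0) (hq : ∀ r : ℕ, 0 < r → q ^ r ≠ 1)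
    (hγ : γ ≠ 0) (hη : η ≠ 0) (hγη : ∀ k : ℤ, γ * η ≠ -q ^ (2 * k + 1)) :
    X11 q γ η * X12 q η = q • (X12 q η * X11 q γ η) ∧
    X11 q γ η * X21 q γ = q • (X21 q γ * X11 q γ η) ∧
    X12 q η * X22 = q • (X22 * X12 q η) ∧
    X21 q γ * X22 = q • (X22 * X21 q γ) ∧
    X12 q η * X21 q γ = X21 q γ * X12 q η ∧
    X11 q γ η * X22 - X22 * X11 q γ η = (q - q⁻¹) • (X12 q η * X21 q γ) ∧
    X11 q γ η * X22 - q • (X12 q η * X21 q γ) = 1 :=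
  stmt6_general q γ η hq0
end

section
/- The Laurent-type C_q[SL_2]-module M(γ,η) (with basis e_i, i in Z, and actions x_{11} e_i = (1+γη q^{2i−1}) e_{i−1}, x_{22} e_i = e_{i+1}, x_{12} e_i = η q^i e_i, x_{21} e_i = γ q^i e_i) is a simple module. -/
open Polynomial Function

theorem aeval_apply_apply_of_diagonal {R ι : Type*} [CommSemiring R]
    {T : Module.End R (ι →₀ R)} {f : ι → R} (hT : ∀ v i, T v i = f i * v i) (p : R[X])
    (v : ι →₀ R) (i : ι) : aeval T p v i = p.eval (f i) * v i := by
  induction p using Polynomial.induction_on generalizing v with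
  | C a => simp
  | add p r hp hr => simp [hp, hr, add_mul]
  | monomial n a ih =>
    rw [pow_succ, ← mul_assoc, map_mul, aeval_X, Module.End.mul_apply, eval_mul_X, ih,
      hT, mul_assoc]

section DiagonalOperator

variable {K ι : Type*} [Field K] {T : Module.End K (ι →₀ K)} {f : ι → K}

theorem single_apply_mem_of_diagonal (hf : Injective f) (hT : ∀ v i, T v i = f i * v i)
    {U : Submodule K (ι →₀ K)} (hU : ∀ v ∈ U, T v ∈ U) {v : ι →₀ K} (hv : v ∈ U) (i : ι) :
    Finsupp.single i (v i) ∈ U := by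
  classical
  set p : K[X] := ∏ j ∈ v.support.erase i, (X - C (f j))
  have hpi : p.eval (f i) ≠ 0 := by
    rw [eval_prod, Finset.prod_ne_zero_iff]
    intro j hj
    simpa [sub_eq_zero] using fun h => (Finset.ne_of_mem_erase hj) (hf h).symm
  have hpv : aeval T p v = Finsupp.single i (p.eval (f i) * v i) := by
    ext k
    rw [aeval_apply_apply_of_diagonal hT, Finsupp.single_apply]
    split_ifs with hik
    · rw [hik]
    by_cases hk : k ∈ v.support
    · rw [eval_prod, Finset.prod_eq_zero (Finset.mem_erase.2 ⟨Ne.symm hik, hk⟩) (by simp),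
        zero_mul]
    · rw [Finsupp.notMem_support_iff.1 hk, mul_zero]
  have hmem : aeval T p v ∈ U := aeval_apply_smul_mem_of_le_comap hv p T hU
  have := U.smul_mem (p.eval (f i))⁻¹ hmem
  rwa [hpv, Finsupp.smul_single, smul_eq_mul, inv_mul_cancel_left₀ hpi] at this

theorem exists_single_one_mem_of_diagonal (hf : Injective f) (hT : ∀ v i, T v i = f i * v i)
    {U : Submodule K (ι →₀ K)} (hU : ∀ v ∈ U, T v ∈ U) (hU0 : U ≠ ⊥) :
    ∃ i, Finsupp.single i (1 : K) ∈ U := by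
  obtain ⟨v, hv, hv0⟩ := Submodule.exists_mem_ne_zero_of_ne_bot hU0
  obtain ⟨i, hi⟩ := Finsupp.support_nonempty_iff.2 hv0
  refine ⟨i, ?_⟩
  have := U.smul_mem (v i)⁻¹ (single_apply_mem_of_diagonal hf hT hU hv i)
  rwa [Finsupp.smul_single, smul_eq_mul, inv_mul_cancel₀ (Finsupp.mem_support_iff.1 hi)] at this

end DiagonalOperator

theorem Finsupp.eq_top_of_forall_single_one_mem {R ι : Type*} [Semiring R]
    {U : Submodule R (ι →₀ R)} (hU : ∀ i, Finsupp.single i (1 : R) ∈ U) : U = ⊤ := by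
  rw [eq_top_iff, ← Finsupp.basisSingleOne.span_eq, Submodule.span_le]
  rintro _ ⟨i, rfl⟩
  simpa using hU i

theorem zpow_injective_of_pow_ne_one {G₀ : Type*} [GroupWithZero G₀] {q : G₀} (hq0 : q ≠ 0)
    (hq : ∀ r : ℕ, 0 < r → q ^ r ≠ 1) :
    Injective fun n : ℤ => q ^ n := by
  have hu : ¬IsOfFinOrder (Units.mk0 q hq0) := by
    rw [isOfFinOrder_iff_pow_eq_one]
    rintro ⟨r, hr, hqr⟩
    exact hq r hr (by simpa using congrArg Units.val hqr)
  intro m n hmn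
  refine injective_zpow_iff_not_isOfFinOrder.2 hu (Units.ext ?_)
  simpa [Units.val_zpow_eq_zpow_val] using hmn

theorem X12_apply_apply (q η : ℂ) (v : ℤ →₀ ℂ) (i : ℤ) : X12 q η v i = η * q ^ i * v i := by
  induction v using Finsupp.induction_linear with
  | zero => simp
  | add v w hv hw => simp [hv, hw, mul_add]
  | single j c =>
    rw [X12, Finsupp.lsum_single, LinearMap.smul_apply, Finsupp.lsingle_apply,
      Finsupp.smul_apply, Finsupp.single_apply]
    split_ifs with h <;> simp [h]

theorem X11_single (q γ η : ℂ) (i : ℤ) (c : ℂ) :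
    X11 q γ η (Finsupp.single i c) = (1 + γ * η * q ^ (2 * i - 1)) • Finsupp.single (i - 1) c := by
  rw [X11, Finsupp.lsum_single]
  rfl

theorem X22_single (i : ℤ) (c : ℂ) : X22 (Finsupp.single i c) = Finsupp.single (i + 1) c := by
  rw [X22, Finsupp.lsum_single]
  rfl

theorem one_add_mul_zpow_ne_zero {K : Type*} [Field K] {q γ η : K} (hq0 : q ≠ 0)
    (hγη : ∀ k : ℤ, γ * η ≠ -q ^ (2 * k + 1)) (i : ℤ) : 1 + γ * η * q ^ (2 * i - 1) ≠ 0 := by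
  intro h
  apply hγη (-i)
  rw [show 2 * -i + 1 = -(2 * i - 1) by ring, zpow_neg]
  have := zpow_ne_zero (2 * i - 1) hq0
  field_simp
  linear_combination h

theorem stmt7_general (q γ η : ℂ) (hq0 : q ≠ 0) (hq : ∀ r : ℕ, 0 < r → q ^ r ≠ 1)
    (hη : η ≠ 0) (hγη : ∀ k : ℤ, γ * η ≠ -q ^ (2 * k + 1)) :
    ∀ U : Submodule ℂ (ℤ →₀ ℂ),
      (∀ v ∈ U, X11 q γ η v ∈ U) → (∀ v ∈ U, X12 q η v ∈ U) →
      (∀ v ∈ U, X21 q γ v ∈ U) → (∀ v ∈ U, X22 v ∈ U) →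
      U = ⊥ ∨ U = ⊤ := by
  intro U h11 h12 _ h22
  refine or_iff_not_imp_left.2 fun hU0 => ?_
  have hf : Injective fun i : ℤ => η * q ^ i :=
    (mul_right_injective₀ hη).comp (zpow_injective_of_pow_ne_one hq0 hq)
  obtain ⟨i₀, hi₀⟩ := exists_single_one_mem_of_diagonal hf (X12_apply_apply q η) h12 hU0
  refine Finsupp.eq_top_of_forall_single_one_mem fun i => ?_
  induction i using Int.inductionOn' with
  | b => exact i₀
  | zero => exact hi₀
  | succ k _ hk => simpa [X22_single] using h22 _ hk
  | pred k _ hk =>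
    have := U.smul_mem (1 + γ * η * q ^ (2 * k - 1))⁻¹ (h11 _ hk)
    rwa [X11_single, smul_smul, inv_mul_cancel₀ (one_add_mul_zpow_ne_zero hq0 hγη k),
      one_smul] at this

/-- The Laurent-type `ℂ_q[SL₂]`-module `M(γ,η)` is simple: any subspace invariant under
the actions of the four generators `x₁₁, x₁₂, x₂₁, x₂₂` is `0` or everything. -/
theorem stmt7 (q γ η : ℂ) (hq0 : q ≠ 0) (hq : ∀ r : ℕ, 0 < r → q ^ r ≠ 1)
    (hγ : γ ≠ 0) (hη : η ≠ 0) (hγη : ∀ k : ℤ, γ * η ≠ -q ^ (2 * k + 1)) :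
    ∀ U : Submodule ℂ (ℤ →₀ ℂ),
      (∀ v ∈ U, X11 q γ η v ∈ U) → (∀ v ∈ U, X12 q η v ∈ U) →
      (∀ v ∈ U, X21 q γ v ∈ U) → (∀ v ∈ U, X22 v ∈ U) →
      U = ⊥ ∨ U = ⊤ :=
  stmt7_general q γ η hq0 hq hη hγη
end

section
/- The highest-weight-type C_q[SL_2]-module M^h(η) with basis {e_i : i in N} and actions x_{11} e_i = (1−q^{2i}) e_{i−1} (with x_{11} e_0 = 0), x_{22} e_i = e_{i+1}, x_{12} e_i = η q^i e_i, x_{21} e_i = −η^{-1} q^{i+1} e_i, is a well-defined simple C_q[SL_2]-module. -/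
/-- `x₁₁ eᵢ = (1 − q^{2i}) e_{i−1}` (with `x₁₁ e₀ = 0`) on the space with basis
`{eᵢ : i ∈ ℕ}`. -/
noncomputable def Y11 (q : ℂ) : Module.End ℂ (ℕ →₀ ℂ) :=
  Finsupp.lsum ℂ fun i : ℕ =>
    if i = 0 then 0 else (1 - q ^ (2 * i)) • Finsupp.lsingle (i - 1)

/-- `x₂₂ eᵢ = e_{i+1}`. -/
noncomputable def Y22 : Module.End ℂ (ℕ →₀ ℂ) :=
  Finsupp.lsum ℂ fun i : ℕ => Finsupp.lsingle (i + 1)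

/-- `x₁₂ eᵢ = η qⁱ eᵢ`. -/
noncomputable def Y12 (q η : ℂ) : Module.End ℂ (ℕ →₀ ℂ) :=
  Finsupp.lsum ℂ fun i : ℕ => (η * q ^ i) • Finsupp.lsingle i

/-- `x₂₁ eᵢ = −η⁻¹ q^{i+1} eᵢ`. -/
noncomputable def Y21 (q η : ℂ) : Module.End ℂ (ℕ →₀ ℂ) :=
  Finsupp.lsum ℂ fun i : ℕ => (-η⁻¹ * q ^ (i + 1)) • Finsupp.lsingle i

lemma Y11_single0 (q : ℂ) (a : ℂ) : Y11 q (Finsupp.single 0 a) = 0 := by simp [Y11]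

lemma Y11_singleS (q : ℂ) (i : ℕ) (a : ℂ) :
    Y11 q (Finsupp.single (i+1) a) = (1 - q ^ (2 * (i+1))) • Finsupp.single i a := by
  simp only [Y11, Finsupp.lsum_single, if_neg (Nat.succ_ne_zero i), LinearMap.smul_apply,
    Finsupp.lsingle_apply, Nat.add_sub_cancel]

lemma Y22_single (i : ℕ) (a : ℂ) : Y22 (Finsupp.single i a) = Finsupp.single (i+1) a := by
  simp [Y22]

lemma Y12_single (q η : ℂ) (i : ℕ) (a : ℂ) :
    Y12 q η (Finsupp.single i a) = (η * q ^ i) • Finsupp.single i a := by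
  simp [Y12]

lemma Y21_single (q η : ℂ) (i : ℕ) (a : ℂ) :
    Y21 q η (Finsupp.single i a) = (-η⁻¹ * q ^ (i+1)) • Finsupp.single i a := by
  simp [Y21]

lemma Y11_pow_kill (q : ℂ) : ∀ m a, (Y11 q ^ (m+1)) (Finsupp.single m a) = 0 := by
  intro m
  induction m with
  | zero => intro a; simpa using Y11_single0 q a
  | succ n ih =>
    intro a
    rw [pow_succ, Module.End.mul_apply, Y11_singleS, map_smul, ih, smul_zero]

lemma Y11_pow_lt (q : ℂ) (m n : ℕ) (h : m < n) (a : ℂ) :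
    (Y11 q ^ n) (Finsupp.single m a) = 0 := by
  obtain ⟨k, rfl⟩ : ∃ k, n = k + (m+1) := ⟨n - (m+1), by omega⟩
  rw [pow_add, Module.End.mul_apply, Y11_pow_kill, map_zero]

lemma Y11_pow_eq (q : ℂ) : ∀ m a, (Y11 q ^ m) (Finsupp.single m a) =
    (∏ k ∈ Finset.range m, (1 - q ^ (2 * (k+1)))) • Finsupp.single 0 a := by
  intro m
  induction m with
  | zero => intro a; simp
  | succ n ih =>
    intro a
    rw [pow_succ, Module.End.mul_apply, Y11_singleS, map_smul, ih, smul_smul,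
      Finset.prod_range_succ]
    congr 1
    ring

/-- The highest-weight-type module `M^h(η)` is a well-defined simple `ℂ_q[SL₂]`-module:
the four operators satisfy the seven defining relations of `ℂ_q[SL₂]`, and any subspace
invariant under all four operators is `0` or everything. -/
theorem stmt8 (q η : ℂ) (hq0 : q ≠ 0) (hq : ∀ r : ℕ, 0 < r → q ^ r ≠ 1) (hη : η ≠ 0) :
    (Y11 q * Y12 q η = q • (Y12 q η * Y11 q) ∧
     Y11 q * Y21 q η = q • (Y21 q η * Y11 q) ∧
     Y12 q η * Y22 = q • (Y22 * Y12 q η) ∧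
     Y21 q η * Y22 = q • (Y22 * Y21 q η) ∧
     Y12 q η * Y21 q η = Y21 q η * Y12 q η ∧
     Y11 q * Y22 - Y22 * Y11 q = (q - q⁻¹) • (Y12 q η * Y21 q η) ∧
     Y11 q * Y22 - q • (Y12 q η * Y21 q η) = 1) ∧
    ∀ U : Submodule ℂ (ℕ →₀ ℂ),
      (∀ v ∈ U, Y11 q v ∈ U) → (∀ v ∈ U, Y12 q η v ∈ U) →
      (∀ v ∈ U, Y21 q η v ∈ U) → (∀ v ∈ U, Y22 v ∈ U) →
      U = ⊥ ∨ U = ⊤ := by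
  constructor
  · refine ⟨?_, ?_, ?_, ?_, ?_, ?_, ?_⟩
    · -- Y11 Y12
      apply Finsupp.lhom_ext; intro i a
      cases i with
      | zero =>
        rw [Module.End.mul_apply, Y12_single, map_smul, Y11_single0, smul_zero,
          LinearMap.smul_apply, Module.End.mul_apply, Y11_single0, map_zero, smul_zero]
      | succ n =>
        rw [Module.End.mul_apply, Y12_single, map_smul, Y11_singleS,
          LinearMap.smul_apply, Module.End.mul_apply, Y11_singleS, map_smul, Y12_single,
          smul_smul, smul_smul, smul_smul]
        congr 1; ring
    · -- Y11 Y21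
      apply Finsupp.lhom_ext; intro i a
      cases i with
      | zero =>
        rw [Module.End.mul_apply, Y21_single, map_smul, Y11_single0, smul_zero,
          LinearMap.smul_apply, Module.End.mul_apply, Y11_single0, map_zero, smul_zero]
      | succ n =>
        rw [Module.End.mul_apply, Y21_single, map_smul, Y11_singleS,
          LinearMap.smul_apply, Module.End.mul_apply, Y11_singleS, map_smul, Y21_single,
          smul_smul, smul_smul, smul_smul]
        congr 1; ring
    · -- Y12 Y22
      apply Finsupp.lhom_ext; intro i a
      rw [Module.End.mul_apply, Y22_single, Y12_single,
        LinearMap.smul_apply, Module.End.mul_apply, Y12_single, map_smul, Y22_single,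
        smul_smul]
      congr 1; ring
    · -- Y21 Y22
      apply Finsupp.lhom_ext; intro i a
      rw [Module.End.mul_apply, Y22_single, Y21_single,
        LinearMap.smul_apply, Module.End.mul_apply, Y21_single, map_smul, Y22_single,
        smul_smul]
      congr 1; ring
    · -- Y12 Y21 comm
      apply Finsupp.lhom_ext; intro i a
      rw [Module.End.mul_apply, Y21_single, map_smul, Y12_single,
        Module.End.mul_apply, Y12_single, map_smul, Y21_single, smul_smul, smul_smul]
      congr 1; ring
    · -- relation 6
      apply Finsupp.lhom_ext; intro i a
      cases i with
      | zero =>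
        rw [LinearMap.sub_apply, Module.End.mul_apply, Y22_single, Y11_singleS,
          Module.End.mul_apply, Y11_single0, map_zero, sub_zero,
          LinearMap.smul_apply, Module.End.mul_apply, Y21_single, map_smul, Y12_single,
          smul_smul, smul_smul]
        congr 1
        field_simp
        ring
      | succ n =>
        rw [LinearMap.sub_apply, Module.End.mul_apply, Y22_single, Y11_singleS,
          Module.End.mul_apply, Y11_singleS, map_smul, Y22_single,
          LinearMap.smul_apply, Module.End.mul_apply, Y21_single, map_smul, Y12_single,
          smul_smul, smul_smul, ← sub_smul]
        congr 1
        field_simp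
        ring
    · -- relation 7
      apply Finsupp.lhom_ext; intro i a
      rw [LinearMap.sub_apply, Module.End.mul_apply, Y22_single, Y11_singleS,
        LinearMap.smul_apply, Module.End.mul_apply, Y21_single, map_smul, Y12_single,
        smul_smul, smul_smul, ← sub_smul, Module.End.one_apply]
      have hc : (1:ℂ) - q ^ (2 * (i + 1)) - q * (-η⁻¹ * q ^ (i + 1)) * (η * q ^ i) = 1 := by
        field_simp; ring
      rw [hc, one_smul]
  · intro U h11 h12 h21 h22
    by_cases hU : U = ⊥
    · exact Or.inl hU
    right
    obtain ⟨v, hvU, hv⟩ := Submodule.exists_mem_ne_zero_of_ne_bot hU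
    have hsupp : v.support.Nonempty := Finsupp.support_nonempty_iff.mpr hv
    set n := v.support.max' hsupp with hn
    -- U closed under powers of Y11
    have hpow : ∀ k, ∀ w ∈ U, (Y11 q ^ k) w ∈ U := by
      intro k
      induction k with
      | zero => intro w hw; simpa using hw
      | succ m ih =>
        intro w hw
        rw [pow_succ, Module.End.mul_apply]
        exact ih _ (h11 w hw)
    have hvsum : (Y11 q ^ n) v =
        ((∏ k ∈ Finset.range n, (1 - q ^ (2 * (k+1)))) * v n) • Finsupp.single 0 1 := by
      conv_lhs => rw [← Finsupp.sum_single v]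
      rw [Finsupp.sum, map_sum]
      rw [Finset.sum_eq_single n]
      · rw [Y11_pow_eq]; simp [Finsupp.smul_single]
      · intro i hi hne
        exact Y11_pow_lt q i n (lt_of_le_of_ne (Finset.le_max' _ _ hi) hne) _
      · intro h; exact absurd (Finset.max'_mem _ hsupp) h
    have hC : (∏ k ∈ Finset.range n, (1 - q ^ (2 * (k+1)))) * v n ≠ 0 := by
      apply mul_ne_zero
      · apply Finset.prod_ne_zero_iff.mpr
        intro k _
        intro h
        exact hq (2 * (k+1)) (by omega) (by linear_combination -h)
      · exact Finsupp.mem_support_iff.mp (Finset.max'_mem _ hsupp)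
    have h0 : Finsupp.single 0 (1:ℂ) ∈ U := by
      have := hpow n v hvU
      rw [hvsum] at this
      have h2 := U.smul_mem ((∏ k ∈ Finset.range n, (1 - q ^ (2 * (k+1)))) * v n)⁻¹ this
      rwa [smul_smul, inv_mul_cancel₀ hC, one_smul] at h2
    have hones : ∀ i : ℕ, Finsupp.single i (1:ℂ) ∈ U := by
      intro i
      induction i with
      | zero => exact h0
      | succ m ih =>
        have := h22 _ ih
        rwa [Y22_single] at this
    have hall : ∀ (i : ℕ) (a : ℂ), Finsupp.single i a ∈ U := by
      intro i a
      have := U.smul_mem a (hones i)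
      rwa [Finsupp.smul_single, smul_eq_mul, mul_one] at this
    rw [eq_top_iff]
    intro w _
    rw [← Finsupp.sum_single w]
    exact Submodule.sum_mem U fun i _ => hall i (w i)
end

section
/- Let W be the Weyl group of a root system with simple roots α_1,...,α_n and fixed W-invariant inner product (·,·). For a reduced word j = (j_1,...,j_l) of w in W, set β_{j,k} = s_{j_1} s_{j_2} ··· s_{j_{k−1}}(α_{j_k}). Then for each k, β_{j,k} = α_{j_k} + Σ_{r<k} (β_{j,k}, β_{j,r}^∨) α_{j_r}, where β^∨ = 2β/(β,β). -/
open scoped RealInnerProductSpace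

/-- The reflection in a (root) vector `a`: `s_a(v) = v − (v, a^∨) a`. -/
noncomputable def rootRefl {E : Type*} [NormedAddCommGroup E] [InnerProductSpace ℝ E]
    (a v : E) : E :=
  v - (2 * ⟪v, a⟫ / ⟪a, a⟫) • a

/-- `wordComp α j m = s_{j 0} ∘ s_{j 1} ∘ ⋯ ∘ s_{j (m-1)}`. -/
noncomputable def wordComp {E : Type*} [NormedAddCommGroup E] [InnerProductSpace ℝ E]
    {n : ℕ} (α : Fin n → E) (j : ℕ → Fin n) : ℕ → E → E
  | 0 => id
  | (m + 1) => wordComp α j m ∘ rootRefl (α (j m))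

/-- `β_{j,k} = s_{j 0} s_{j 1} ⋯ s_{j (k-1)} (α_{j k})` (indices from `0`). -/
noncomputable def betaRoot {E : Type*} [NormedAddCommGroup E] [InnerProductSpace ℝ E]
    {n : ℕ} (α : Fin n → E) (j : ℕ → Fin n) (k : ℕ) : E :=
  wordComp α j k (α (j k))

/-- The pairing `(u, w^∨) = 2(u,w)/(w,w)`. -/
noncomputable def coPairing {E : Type*} [NormedAddCommGroup E] [InnerProductSpace ℝ E]
    (u w : E) : ℝ :=
  2 * ⟪u, w⟫ / ⟪w, w⟫

section Aux

variable {E : Type*} [NormedAddCommGroup E] [InnerProductSpace ℝ E]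

lemma rootRefl_inner (a v w : E) : ⟪rootRefl a v, rootRefl a w⟫ = ⟪v, w⟫ := by
  by_cases h : (⟪a, a⟫ : ℝ) = 0
  · have ha : a = 0 := inner_self_eq_zero.mp h
    simp [rootRefl, ha]
  · simp only [rootRefl, inner_sub_left, inner_sub_right, real_inner_smul_left,
      real_inner_smul_right]
    rw [real_inner_comm a w, real_inner_comm a v]
    field_simp
    ring

lemma rootRefl_rootRefl (a v : E) : rootRefl a (rootRefl a v) = v := by
  by_cases h : (⟪a, a⟫ : ℝ) = 0
  · have ha : a = 0 := inner_self_eq_zero.mp h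
    simp [rootRefl, ha]
  · have key : 2 * ⟪rootRefl a v, a⟫ / ⟪a, a⟫ = -(2 * ⟪v, a⟫ / ⟪a, a⟫) := by
      simp only [rootRefl, inner_sub_left, real_inner_smul_left]
      field_simp
      ring
    show rootRefl a v - (2 * ⟪rootRefl a v, a⟫ / ⟪a, a⟫) • a = v
    rw [key]
    simp only [rootRefl, neg_smul, sub_neg_eq_add]
    abel

lemma rootRefl_self (a : E) : rootRefl a a = -a := by
  by_cases h : (⟪a, a⟫ : ℝ) = 0
  · have ha : a = 0 := inner_self_eq_zero.mp h
    simp [rootRefl, ha]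
  · unfold rootRefl
    rw [mul_div_assoc, div_self h, mul_one, two_smul]
    abel

lemma coPairing_rootRefl (a u w : E) :
    coPairing (rootRefl a u) (rootRefl a w) = coPairing u w := by
  unfold coPairing
  rw [rootRefl_inner, rootRefl_inner]

lemma coPairing_neg_right (u w : E) : coPairing u (-w) = -coPairing u w := by
  unfold coPairing
  rw [inner_neg_right, inner_neg_neg]
  ring

lemma wordComp_shift {n : ℕ} (α : Fin n → E) :
    ∀ (m : ℕ) (j : ℕ → Fin n),
      wordComp α j (m + 1) = rootRefl (α (j 0)) ∘ wordComp α (fun i => j (i + 1)) m := by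
  intro m
  induction m with
  | zero => intro j; simp [wordComp]
  | succ m ih =>
      intro j
      show wordComp α j (m + 1) ∘ rootRefl (α (j (m + 1))) = _
      rw [ih j]
      rfl

lemma betaRoot_succ {n : ℕ} (α : Fin n → E) (j : ℕ → Fin n) (k : ℕ) :
    betaRoot α j (k + 1) = rootRefl (α (j 0)) (betaRoot α (fun i => j (i + 1)) k) := by
  unfold betaRoot
  rw [wordComp_shift]
  rfl

lemma betaRoot_zero {n : ℕ} (α : Fin n → E) (j : ℕ → Fin n) :
    betaRoot α j 0 = α (j 0) := rfl

lemma beta_expansion {n : ℕ} (α : Fin n → E) :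
    ∀ (k : ℕ) (j : ℕ → Fin n), betaRoot α j k =
      α (j k) + ∑ r ∈ Finset.range k,
        coPairing (betaRoot α j k) (betaRoot α j r) • α (j r) := by
  intro k
  induction k with
  | zero => intro j; simp [betaRoot_zero]
  | succ k ih =>
      intro j
      set j' : ℕ → Fin n := fun i => j (i + 1) with hj'
      have hb : ∀ m, betaRoot α j (m + 1) = rootRefl (α (j 0)) (betaRoot α j' m) :=
        fun m => betaRoot_succ α j m
      rw [Finset.sum_range_succ']
      have hc : ∀ r, coPairing (betaRoot α j (k + 1)) (betaRoot α j (r + 1)) =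
          coPairing (betaRoot α j' k) (betaRoot α j' r) := by
        intro r; rw [hb, hb, coPairing_rootRefl]
      have hc0 : coPairing (betaRoot α j (k + 1)) (betaRoot α j 0) =
          -(coPairing (betaRoot α j' k) (α (j 0))) := by
        rw [hb, betaRoot_zero]
        calc coPairing (rootRefl (α (j 0)) (betaRoot α j' k)) (α (j 0))
            = coPairing (rootRefl (α (j 0)) (betaRoot α j' k))
                (rootRefl (α (j 0)) (rootRefl (α (j 0)) (α (j 0)))) := by
              rw [rootRefl_rootRefl]
          _ = coPairing (betaRoot α j' k) (rootRefl (α (j 0)) (α (j 0))) := by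
              rw [coPairing_rootRefl]
          _ = -(coPairing (betaRoot α j' k) (α (j 0))) := by
              rw [rootRefl_self, coPairing_neg_right]
      simp only [hc, hc0]
      rw [hb k]
      have hL : rootRefl (α (j 0)) (betaRoot α j' k) =
          betaRoot α j' k - coPairing (betaRoot α j' k) (α (j 0)) • α (j 0) := rfl
      rw [hL]
      nth_rewrite 1 [ih j']
      simp only [hj', neg_smul]
      abel

end Aux

/-- For a reduced word `(j 0, …, j (l-1))` in the Weyl group of a root system with
simple roots `α`, one has `β_{j,k} = α_{j k} + Σ_{r<k} (β_{j,k}, β_{j,r}^∨) α_{j r}`. -/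

theorem stmt10 {E : Type*} [NormedAddCommGroup E] [InnerProductSpace ℝ E] {n l : ℕ}
    (α : Fin n → E) (hα : ∀ i, α i ≠ 0) (hli : LinearIndependent ℝ α)
    (hcartan : ∀ i j, ∃ m : ℤ, coPairing (α i) (α j) = m)
    (j : ℕ → Fin n)
    (hred : ∀ (l' : ℕ) (j' : ℕ → Fin n), wordComp α j' l' = wordComp α j l → l ≤ l') :
    ∀ k < l, betaRoot α j k =
      α (j k) + ∑ r ∈ Finset.range k,
        coPairing (betaRoot α j k) (betaRoot α j r) • α (j r) := by
  intro k _
  exact beta_expansion α k j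
end
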